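/- For x > 1, the sequence of ratios of consecutive Legendre polynomials P_d(x)/P_{d+1}(x) is non-increasing in d and satisfies 0 ≤ P_d(x)/P_{d+1}(x) ≤ 1/x for all d ≥ 0. -/
import Mathlib


noncomputable def legendre : ℕ → ℝ → ℝ
  | 0 => fun _ => 1
  | 1 => fun x => x
  | (n + 2) => fun x =>
      ((2 * (n : ℝ) + 3) * x * legendre (n + 1) x - ((n : ℝ) + 1) * legendre n x) / ((n : ℝ) + 2)

lemma legendre_rec (n : ℕ) (x : ℝ) :
    ((n : ℝ) + 2) * legendre (n + 2) x =
      (2 * (n : ℝ) + 3) * x * legendre (n + 1) x - ((n : ℝ) + 1) * legendre n x := by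
  have h : ((n : ℝ) + 2) ≠ 0 := by positivity
  rw [legendre]
  field_simp

lemma legendre_pos_grow (x : ℝ) (hx : 1 < x) :
    ∀ d : ℕ, 0 < legendre d x ∧ x * legendre d x ≤ legendre (d + 1) x := by
  intro d
  induction d using Nat.strong_induction_on with
  | _ d ih =>
    match d with
    | 0 => exact ⟨by norm_num [legendre], by simp [legendre]⟩
    | 1 =>
      refine ⟨by simp only [legendre]; linarith, ?_⟩
      have h := legendre_rec 0 x
      simp [legendre] at h ⊢
      nlinarith
    | (n + 2) =>
      obtain ⟨h0, h1⟩ := ih n (by omega)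
      obtain ⟨h0', h1'⟩ := ih (n + 1) (by omega)
      have hr := legendre_rec n x
      have hr' := legendre_rec (n + 1) x
      push_cast at hr hr'
      have hn : (0:ℝ) ≤ (n : ℝ) := Nat.cast_nonneg n
      constructor
      · nlinarith
      · have hc : 0 < legendre (n + 2) x := by nlinarith
        have hbc2 : legendre (n + 1) x ≤ x * legendre (n + 2) x := by nlinarith
        nlinarith [mul_nonneg hn (sub_nonneg.2 hbc2)]

lemma legendre_turan (x : ℝ) (hx : 1 < x) :
    ∀ d : ℕ, legendre (d + 1) x * legendre (d + 1) x ≤ legendre d x * legendre (d + 2) x := by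
  intro d
  induction d with
  | zero =>
    have h := legendre_rec 0 x
    simp [legendre] at h ⊢
    nlinarith
  | succ n ih =>
    obtain ⟨ha, hab⟩ := legendre_pos_grow x hx n
    obtain ⟨hb, hbc⟩ := legendre_pos_grow x hx (n + 1)
    obtain ⟨hc, hcd⟩ := legendre_pos_grow x hx (n + 2)
    have hr := legendre_rec n x
    have hr' := legendre_rec (n + 1) x
    push_cast at hr hr'
    have hn : (0:ℝ) ≤ (n : ℝ) := Nat.cast_nonneg n
    set a := legendre n x
    set b := legendre (n + 1) x
    set c := legendre (n + 2) x
    set e := legendre (n + 3) x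
    -- goal: c * c ≤ b * e
    have hac : ((n:ℝ)+1)*(a*c) = (2*(n:ℝ)+3)*x*b*c - ((n:ℝ)+2)*(c*c) := by
      linear_combination c * hr
    have hH : 0 ≤ (2*(n:ℝ)+3)*x*b*c - ((n:ℝ)+1)*(b*b) - ((n:ℝ)+2)*(c*c) := by
      nlinarith [mul_nonneg (sub_nonneg.2 ih) hn, ih]
    have hbxc : 0 ≤ b * (x*c - b) := by
      nlinarith [mul_nonneg hb.le (sub_nonneg.2 hbc),
        mul_nonneg (mul_nonneg hb.le hc.le) (sub_nonneg.2 hx.le),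
        mul_nonneg (mul_nonneg hb.le hb.le) (sub_nonneg.2 hx.le)]
    have key : ((n:ℝ)+2)*(((n:ℝ)+3)*(b*e) - ((n:ℝ)+3)*(c*c)) =
        ((n:ℝ)+3)*((2*(n:ℝ)+3)*x*b*c - ((n:ℝ)+1)*(b*b) - ((n:ℝ)+2)*(c*c)) + b*(x*c - b) := by
      linear_combination ((n:ℝ)+2)*b*hr'
    have hpos2 : (0:ℝ) < (n:ℝ)+2 := by positivity
    have hpos3 : (0:ℝ) < (n:ℝ)+3 := by positivity
    have h4 : 0 ≤ ((n:ℝ)+3)*(b*e) - ((n:ℝ)+3)*(c*c) := by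
      by_contra h
      push_neg at h
      nlinarith [mul_nonneg (le_of_lt hpos3) hH]
    by_contra h
    push_neg at h
    nlinarith

theorem stmt_10 (x : ℝ) (hx : 1 < x) :
    (∀ d : ℕ, legendre (d + 1) x / legendre (d + 2) x ≤ legendre d x / legendre (d + 1) x) ∧
    (∀ d : ℕ, 0 ≤ legendre d x / legendre (d + 1) x ∧ legendre d x / legendre (d + 1) x ≤ 1 / x) := by
  have hx0 : (0:ℝ) < x := by linarith
  constructor
  · intro d
    obtain ⟨hb, _⟩ := legendre_pos_grow x hx (d + 1)
    obtain ⟨hc, _⟩ := legendre_pos_grow x hx (d + 2)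
    rw [div_le_div_iff₀ hc hb]
    have := legendre_turan x hx d
    linarith
  · intro d
    obtain ⟨ha, hab⟩ := legendre_pos_grow x hx d
    obtain ⟨hb, _⟩ := legendre_pos_grow x hx (d + 1)
    constructor
    · positivity
    · rw [div_le_div_iff₀ hb hx0]
      linarith
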